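/- arXiv:2503.06115 — 2 statements merged into one kernel-verified Lean document; each statement's English description precedes it below -/
import Mathlib

section
/- For all real y and a > 0, the function y ↦ e^{-y/2}·(cosh y)^{-(a+1/2)} satisfies ∫_ℝ e^{-y/2}·(cosh y)^{-(a+1/2)} dy = √(2π)·Γ(a)/Γ(a+1/2); in particular, p(y) := (Γ(a+1/2)/(√(2π)·Γ(a)))·e^{-y/2}·(cosh y)^{-(a+1/2)} is a probability density on ℝ. -/
/-!
The logistic substitution t = σ(2y) satisfies t = e^y / (2 cosh y), 1 - t = e^{-y} / (2 cosh y)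
and dt = 2 t (1 - t) dy, so it turns ∫ e^{(α-β)y} (2 cosh y)^{-(α+β)} dy into half the beta
integral B(α, β). With α = a/2, β = (a+1)/2 this is our integral up to the factor 2^{a+1/2}, and
Legendre's duplication formula Γ(a/2) Γ(a/2 + 1/2) = 2^{1-a} √π Γ(a) gives the closed form.
-/

open Real MeasureTheory Set ProbabilityTheory

theorem ProbabilityTheory.integral_Ioo_rpow_mul_one_sub_rpow {α β : ℝ} (hα : 0 < α) (hβ : 0 < β) :
    ∫ x in Ioo (0 : ℝ) 1, x ^ (α - 1) * (1 - x) ^ (β - 1) = beta α β := by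
  rw [beta_eq_betaIntegralReal α β hα hβ, Complex.betaIntegral,
    intervalIntegral.integral_of_le zero_le_one, ← integral_Ioc_eq_integral_Ioo,
    ← RCLike.re_to_complex, ← integral_re]
  · refine setIntegral_congr_fun measurableSet_Ioc fun x ⟨hx0, hx1⟩ ↦ ?_
    norm_cast
    rw [← Complex.ofReal_cpow hx0.le, ← Complex.ofReal_cpow (by linarith), RCLike.re_to_complex,
      Complex.re_mul_ofReal, Complex.ofReal_re]
  · rw [← IntegrableOn, ← intervalIntegrable_iff_integrableOn_Ioc_of_le zero_le_one]
    exact Complex.betaIntegral_convergent (by simpa) (by simpa)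

theorem ProbabilityTheory.beta_div_two_add_one_div_two (a : ℝ) :
    beta (a / 2) ((a + 1) / 2) = 2 ^ (1 - a) * √π * Gamma a / Gamma (a + 1 / 2) := by
  rw [beta, show (a + 1) / 2 = a / 2 + 1 / 2 by ring, Gamma_mul_Gamma_add_half,
    show a / 2 + (a / 2 + 1 / 2) = a + 1 / 2 by ring, mul_div_cancel₀ a two_ne_zero]
  ring

theorem Real.integral_sigmoid_rpow_mul_one_sub_sigmoid_rpow {α β : ℝ} (hα : 0 < α) (hβ : 0 < β) :
    ∫ x, sigmoid x ^ α * (1 - sigmoid x) ^ β = beta α β := by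
  have h := integral_image_eq_integral_abs_deriv_smul MeasurableSet.univ
    (fun x _ ↦ (hasDerivAt_sigmoid x).hasDerivWithinAt) sigmoid_injective.injOn
    (fun t ↦ t ^ (α - 1) * (1 - t) ^ (β - 1))
  rw [image_univ, range_sigmoid, integral_Ioo_rpow_mul_one_sub_rpow hα hβ,
    Measure.restrict_univ] at h
  rw [h]
  congr 1 with x
  have hσ := sigmoid_pos x
  have hσ' : 0 < 1 - sigmoid x := sub_pos.2 (sigmoid_lt_one x)
  rw [smul_eq_mul, abs_of_pos (mul_pos hσ hσ'), rpow_sub_one hσ.ne', rpow_sub_one hσ'.ne']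
  field_simp

theorem Real.sigmoid_two_mul (y : ℝ) : sigmoid (2 * y) = exp y / (2 * cosh y) := by
  have h : exp (-(2 * y)) = exp (-y) / exp y := by rw [← exp_sub]; ring_nf
  rw [sigmoid_def, cosh_eq, h]
  field_simp

theorem Real.one_sub_sigmoid_two_mul (y : ℝ) :
    1 - sigmoid (2 * y) = exp (-y) / (2 * cosh y) := by
  rw [← sigmoid_neg, ← mul_neg, sigmoid_two_mul, cosh_neg]

theorem Real.integral_exp_mul_mul_two_mul_cosh_rpow {α β : ℝ} (hα : 0 < α) (hβ : 0 < β) :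
    ∫ y, exp ((α - β) * y) * (2 * cosh y) ^ (-(α + β)) = beta α β / 2 := by
  have h := Measure.integral_comp_mul_left (fun x ↦ sigmoid x ^ α * (1 - sigmoid x) ^ β) 2
  rw [integral_sigmoid_rpow_mul_one_sub_sigmoid_rpow hα hβ] at h
  rw [div_eq_inv_mul, ← smul_eq_mul, ← abs_of_pos (inv_pos.2 (two_pos : (0 : ℝ) < 2)), ← h]
  congr 1 with y
  have hc : 0 < 2 * cosh y := by positivity
  rw [one_sub_sigmoid_two_mul, sigmoid_two_mul, div_rpow (exp_pos _).le hc.le,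
    div_rpow (exp_pos _).le hc.le, ← exp_mul, ← exp_mul, rpow_neg hc.le, rpow_add hc, sub_mul,
    exp_sub]
  field_simp
  rw [← exp_add, add_neg_cancel, exp_zero]

theorem Real.integral_exp_neg_div_two_mul_cosh_rpow {a : ℝ} (ha : 0 < a) :
    ∫ y, exp (-y / 2) * cosh y ^ (-(a + 1 / 2)) = √(2 * π) * Gamma a / Gamma (a + 1 / 2) := by
  have hintegrand (y : ℝ) : exp (-y / 2) * cosh y ^ (-(a + 1 / 2)) = 2 ^ (a + 1 / 2) *
      (exp ((a / 2 - (a + 1) / 2) * y) * (2 * cosh y) ^ (-(a / 2 + (a + 1) / 2))) := by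
    rw [mul_rpow zero_le_two (cosh_pos y).le, show a / 2 + (a + 1) / 2 = a + 1 / 2 by ring,
      rpow_neg zero_le_two, show (a / 2 - (a + 1) / 2) * y = -y / 2 by ring]
    field_simp
  have hpow : (2 : ℝ) ^ (a + 1 / 2) * 2 ^ (1 - a) = 2 * 2 ^ (1 / 2 : ℝ) := by
    rw [← rpow_add two_pos, show a + 1 / 2 + (1 - a) = 1 + 1 / 2 by ring, rpow_add two_pos,
      rpow_one]
  simp_rw [hintegrand]
  rw [integral_const_mul, integral_exp_mul_mul_two_mul_cosh_rpow (by positivity) (by positivity),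
    beta_div_two_add_one_div_two, sqrt_mul zero_le_two, sqrt_eq_rpow 2]
  linear_combination √π * Gamma a / Gamma (a + 1 / 2) / 2 * hpow

theorem stmt_8 (a : ℝ) (ha : 0 < a) :
    (∫ y : ℝ, Real.exp (-y/2) * (Real.cosh y) ^ (-(a + 1/2))
      = Real.sqrt (2 * Real.pi) * Real.Gamma a / Real.Gamma (a + 1/2)) ∧
    (∫ y : ℝ, (Real.Gamma (a + 1/2) / (Real.sqrt (2 * Real.pi) * Real.Gamma a))
      * Real.exp (-y/2) * (Real.cosh y) ^ (-(a + 1/2)) = 1) := by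
  refine ⟨integral_exp_neg_div_two_mul_cosh_rpow ha, ?_⟩
  simp_rw [mul_assoc]
  rw [integral_const_mul, integral_exp_neg_div_two_mul_cosh_rpow ha]
  field_simp
end

section
/- Let Y have density p(y) = (Γ(a+1/2)/(√(2π)·Γ(a)))·e^{-y/2}·(cosh y)^{-(a+1/2)} on ℝ, with a > 0. Then for every λ with 0 < λ < a, E[e^{λ|Y|}] ≤ 2^{a+2}·a/(a − λ). -/
/-!
Since `e^{|y|} ≤ 2 cosh y` and `e^{-y/2} ≤ e^{|y|/2}`, the integrand is at most
`C · 2^{a+1/2} · e^{-(a-λ)|y|}`, where `C = Γ(a+1/2) / (√(2π) Γ(a))`, and `∫ e^{-b|y|} dy = 2/b`.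
It remains to see `C ≤ √2 a`, i.e. `Γ(a+1/2) ≤ 2√π Γ(a+1)`. For `a ≥ 1/2` this follows from
log-convexity, `Γ(a+1/2)² ≤ Γ(a) Γ(a+1) = a Γ(a)²`; for `a < 1/2` from `Γ ≤ Γ(1/2) = √π` on
`[1/2, 1]` and `Γ ≥ √π - 1` on `[1, 3/2)`, using `9/4 ≤ π`.
-/

open Real MeasureTheory Set

namespace Real

lemma Gamma_add_half_le_sqrt_mul_Gamma {a : ℝ} (ha : 0 < a) :
    Gamma (a + 1 / 2) ≤ √a * Gamma a := by
  have hΓ := Gamma_pos_of_pos ha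
  have h := Gamma_mul_add_mul_le_rpow_Gamma_mul_rpow_Gamma ha (by linarith : 0 < a + 1)
    one_half_pos one_half_pos (add_halves 1)
  rwa [show 1 / 2 * a + 1 / 2 * (a + 1) = a + 1 / 2 by ring, Gamma_add_one ha.ne',
    ← mul_rpow hΓ.le (by positivity), ← sqrt_eq_rpow,
    show Gamma a * (a * Gamma a) = a * Gamma a ^ 2 by ring, sqrt_mul ha.le, sqrt_sq hΓ.le] at h

lemma Gamma_le_sqrt_pi {x : ℝ} (hx : 1 / 2 ≤ x) (hx1 : x ≤ 1) : Gamma x ≤ √π :=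
  Gamma_one_half_eq ▸ Gamma_strictAntiOn_Ioc.antitoneOn ⟨one_half_pos, one_half_lt_one.le⟩
    ⟨by linarith, hx1⟩ hx

lemma sqrt_pi_sub_one_le_Gamma {x : ℝ} (hx : 1 ≤ x) (hx' : x < 3 / 2) : √π - 1 ≤ Gamma x := by
  have hΓ32 : Gamma (3 / 2) = √π / 2 := by
    rw [show (3 / 2 : ℝ) = 1 / 2 + 1 by norm_num, Gamma_add_one one_half_pos.ne', Gamma_one_half_eq]
    ring
  -- the chord of the convex function `Γ` through `3/2` and `2` lies below its graph left of `3/2`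
  have hslope := convexOn_Gamma.slope_mono_adjacent (mem_Ioi.mpr (by linarith : 0 < x))
    (mem_Ioi.mpr two_pos) hx' (by norm_num : (3 / 2 : ℝ) < 2)
  rw [hΓ32, Gamma_two, div_le_div_iff₀ (by linarith) (by norm_num)] at hslope
  have hsqrt : √π < 2 := by
    rw [sqrt_lt' two_pos]; linarith [pi_lt_four]
  nlinarith

lemma Gamma_add_half_le_two_sqrt_pi_mul_Gamma_add_one {a : ℝ} (ha : 0 < a) :
    Gamma (a + 1 / 2) ≤ 2 * √π * Gamma (a + 1) := by
  have hπ : 3 / 2 ≤ √π := by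
    rw [le_sqrt (by norm_num) pi_pos.le]; linarith [pi_gt_three]
  rcases le_or_gt (1 / 2) a with hbig | hsmall
  · have hΓ := Gamma_pos_of_pos ha
    have hsa : 1 / 2 ≤ √a := by
      rw [le_sqrt (by norm_num) ha.le]; linarith
    calc Gamma (a + 1 / 2) ≤ √a * Gamma a := Gamma_add_half_le_sqrt_mul_Gamma ha
      _ ≤ 2 * √π * (√a * √a) * Gamma a := by
        gcongr; nlinarith
      _ = 2 * √π * Gamma (a + 1) := by
        rw [mul_self_sqrt ha.le, Gamma_add_one ha.ne']; ring
  · calc Gamma (a + 1 / 2) ≤ √π := Gamma_le_sqrt_pi (by linarith) (by linarith)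
      _ ≤ 2 * √π * (√π - 1) := by nlinarith
      _ ≤ 2 * √π * Gamma (a + 1) := by
        gcongr; exact sqrt_pi_sub_one_le_Gamma (by linarith) (by linarith)

lemma Gamma_add_half_div_sqrt_two_pi_mul_Gamma_le {a : ℝ} (ha : 0 < a) :
    Gamma (a + 1 / 2) / (√(2 * π) * Gamma a) ≤ √2 * a := by
  have h := Gamma_add_half_le_two_sqrt_pi_mul_Gamma_add_one ha
  rw [Gamma_add_one ha.ne'] at h
  rw [div_le_iff₀ (by have := Gamma_pos_of_pos ha; positivity), sqrt_mul zero_le_two]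
  have h2 : √2 * √2 = 2 := mul_self_sqrt zero_le_two
  calc Gamma (a + 1 / 2) ≤ 2 * √π * (a * Gamma a) := h
    _ = √2 * a * (√2 * √π * Gamma a) := by linear_combination -(√π * a * Gamma a) * h2

lemma cosh_rpow_neg_le (y : ℝ) {r : ℝ} (hr : 0 ≤ r) :
    cosh y ^ (-r) ≤ 2 ^ r * exp (-(r * |y|)) := by
  have hcosh : exp |y| / 2 ≤ cosh y := by
    rw [cosh_eq]; linarith [exp_abs_le y]
  calc cosh y ^ (-r) ≤ (exp |y| / 2) ^ (-r) :=
        rpow_le_rpow_of_nonpos (by positivity) hcosh (neg_nonpos.mpr hr)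
    _ = 2 ^ r * exp (-(r * |y|)) := by
        rw [div_rpow (exp_pos _).le zero_le_two, ← exp_mul, rpow_neg zero_le_two, div_inv_eq_mul,
          mul_comm, mul_comm |y|, neg_mul]

lemma exp_neg_half_mul_cosh_rpow_le (y : ℝ) {a : ℝ} (ha : -(1 / 2) ≤ a) :
    exp (-y / 2) * cosh y ^ (-(a + 1 / 2)) ≤ 2 ^ (a + 1 / 2) * exp (-(a * |y|)) := by
  calc exp (-y / 2) * cosh y ^ (-(a + 1 / 2))
      ≤ exp (|y| / 2) * (2 ^ (a + 1 / 2) * exp (-((a + 1 / 2) * |y|))) := by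
        gcongr
        · linarith [neg_abs_le y]
        · exact cosh_rpow_neg_le y (by linarith)
    _ = 2 ^ (a + 1 / 2) * exp (-(a * |y|)) := by
        rw [mul_left_comm, ← exp_add]; ring_nf

lemma integral_exp_neg_mul_abs {b : ℝ} (hb : 0 < b) : ∫ y, exp (-(b * |y|)) = 2 / b := by
  rw [integral_comp_abs (f := fun y => exp (-(b * y)))]
  simp_rw [← neg_mul]
  rw [integral_exp_mul_Ioi (neg_neg_of_pos hb), mul_zero, exp_zero]
  field_simp

lemma integrable_exp_neg_mul_abs {b : ℝ} (hb : 0 < b) : Integrable fun y => exp (-(b * |y|)) :=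
  .of_integral_ne_zero (by rw [integral_exp_neg_mul_abs hb]; positivity)

end Real

theorem stmt_9_general (a l : ℝ) (ha : 0 < a) (hla : l < a) :
    ∫ y : ℝ, Real.exp (l * |y|) *
      ((Real.Gamma (a + 1/2) / (Real.sqrt (2 * Real.pi) * Real.Gamma a))
        * Real.exp (-y/2) * (Real.cosh y) ^ (-(a + 1/2)))
      ≤ (2:ℝ) ^ (a + 2) * a / (a - l) := by
  set C := Gamma (a + 1 / 2) / (√(2 * π) * Gamma a)
  have hC : 0 ≤ C := by have := Gamma_pos_of_pos ha; positivity
  have hb : 0 < a - l := sub_pos.mpr hla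
  have hdom (y : ℝ) : exp (l * |y|) * (C * exp (-y / 2) * cosh y ^ (-(a + 1 / 2)))
      ≤ C * 2 ^ (a + 1 / 2) * exp (-((a - l) * |y|)) :=
    calc _ = C * exp (l * |y|) * (exp (-y / 2) * cosh y ^ (-(a + 1 / 2))) := by ring
      _ ≤ C * exp (l * |y|) * (2 ^ (a + 1 / 2) * exp (-(a * |y|))) :=
        mul_le_mul_of_nonneg_left (exp_neg_half_mul_cosh_rpow_le y (by linarith))
          (by positivity)
      _ = C * 2 ^ (a + 1 / 2) * exp (-((a - l) * |y|)) := by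
        rw [show -((a - l) * |y|) = l * |y| + -(a * |y|) by ring, exp_add]; ring
  have hpow : (2 : ℝ) ^ (a + 1 / 2) * 2 * √2 = 2 ^ (a + 2) := by
    rw [sqrt_eq_rpow, ← rpow_add_one two_ne_zero, ← rpow_add two_pos]; ring_nf
  calc _ ≤ ∫ y, C * 2 ^ (a + 1 / 2) * exp (-((a - l) * |y|)) :=
        integral_mono_of_nonneg (ae_of_all _ fun y => by have := cosh_pos y; positivity)
          ((integrable_exp_neg_mul_abs hb).const_mul _) (ae_of_all _ hdom)
    _ = C * 2 ^ (a + 1 / 2) * 2 / (a - l) := by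
        rw [integral_const_mul, integral_exp_neg_mul_abs hb]; ring
    _ ≤ √2 * a * 2 ^ (a + 1 / 2) * 2 / (a - l) := by
        gcongr; exact Gamma_add_half_div_sqrt_two_pi_mul_Gamma_le ha
    _ = 2 ^ (a + 2) * a / (a - l) := by rw [← hpow]; ring

theorem stmt_9 (a l : ℝ) (ha : 0 < a) (hl0 : 0 < l) (hla : l < a) :
    ∫ y : ℝ, Real.exp (l * |y|) *
      ((Real.Gamma (a + 1/2) / (Real.sqrt (2 * Real.pi) * Real.Gamma a))
        * Real.exp (-y/2) * (Real.cosh y) ^ (-(a + 1/2)))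
      ≤ (2:ℝ) ^ (a + 2) * a / (a - l) :=
  stmt_9_general a l ha hla
end
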